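/- arXiv:0809.2300 — 2 statements merged into one kernel-verified Lean document; each statement's English description precedes it below -/
import Mathlib

section
/- Let Ω be a finite set, R_X : Ω × Ω → [0,∞) transition rates with R_X(x,x) = 0 and symmetric support, and Q a strictly positive probability measure on Ω. Let R_XX : (Ω×Ω) × (Ω×Ω) → [0,∞) be a Markov self-coupling of R_X, i.e. ∑_{y'} R_XX((x,y),(x',y')) = R_X(x,x') for all x, x', y, and ∑_{x'} R_XX((x,y),(x',y')) = R_X(y,y') for all x, y, y'. Define the acceptance probability a(y,y') = min(1, [Q(y')·R_X(y',y)] / [Q(y)·R_X(y,y')]) for y ≠ y' with R_X(y,y') > 0, and a(y,y) = 1. Define the joint rates R_XY((x,y),(x',y')) = R_XX((x,y),(x',y'))·a(y,y') for y' ≠ y, and R_XY((x,y),(x',y)) = R_XX((x,y),(x',y)) + ∑_{y'≠y} R_XX((x,y),(x',y'))·(1 − a(y,y')). Then: (i) ∑_{y'} R_XY((x,y),(x',y')) = R_X(x,x') for all x, x', y (the first marginal has rates R_X); and (ii) for y' ≠ y, ∑_{x'} R_XY((x,y),(x',y')) = R_X(y,y')·a(y,y'), which depends only on (y,y') and satisfies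 detailed balance with respect to Q (the second marginal is a Markov process whose stationary distribution is Q). -/
/-!
Rejecting a proposed jump of the second component and leaving it where it is only moves rate
within a row of the coupled generator: the total rate of each `x`-jump is unchanged, so the
first marginal still has rates `RX`.  A proposal `y → y'` with `y' ≠ y` is accepted with
probability `a y y'` whatever `x` does, so the second marginal has rates `RX y y' * a y y'`,
which are the Metropolis rates for `Q`; they are reversible because
`p * min 1 (q / p) = min p q` is symmetric in `p = Q y * RX y y'` and `q = Q y' * RX y' y`.
-/

open Finset

section Metropolis

variable {Ω : Type*} [DecidableEq Ω]

theorem mul_min_one_div_of_pos {K : Type*} [Field K] [LinearOrder K] [IsStrictOrderedRing K]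
    {p : K} (q : K) (hp : 0 < p) : p * min 1 (q / p) = min p q := by
  rw [mul_min_of_nonneg _ _ hp.le, mul_one, mul_div_cancel₀ _ hp.ne']

noncomputable def metropolisAcceptance (Q : Ω → ℝ) (R : Ω → Ω → ℝ) (y y' : Ω) : ℝ :=
  if y = y' then 1
  else if 0 < R y y' then min 1 ((Q y' * R y' y) / (Q y * R y y'))
  else 1

theorem metropolisAcceptance_detailed_balance {Q : Ω → ℝ} {R : Ω → Ω → ℝ}
    (hQ : ∀ x, 0 < Q x) (hR : ∀ x x', 0 ≤ R x x') (hRsymm : ∀ x x', 0 < R x x' ↔ 0 < R x' x)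
    (y y' : Ω) :
    Q y * (R y y' * metropolisAcceptance Q R y y') =
      Q y' * (R y' y * metropolisAcceptance Q R y' y) := by
  obtain rfl | hne := eq_or_ne y y'
  · rfl
  by_cases hpos : 0 < R y y'
  · have hpos' : 0 < R y' y := (hRsymm y y').mp hpos
    simp only [metropolisAcceptance, if_neg hne, if_neg hne.symm, if_pos hpos, if_pos hpos',
      ← mul_assoc]
    rw [mul_min_one_div_of_pos _ (mul_pos (hQ y) hpos),
      mul_min_one_div_of_pos _ (mul_pos (hQ y') hpos'), min_comm]
  · have hzero : R y y' = 0 := le_antisymm (not_lt.mp hpos) (hR y y')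
    have hzero' : R y' y = 0 :=
      le_antisymm (not_lt.mp fun h => hpos ((hRsymm y y').mpr h)) (hR y' y)
    simp [hzero, hzero']

end Metropolis

section Metropolize

variable {ι R : Type*} [Fintype ι] [DecidableEq ι] [CommRing R]

/-- Row `i` of a generator after thinning each off-diagonal rate `f j` by the acceptance
probability `w j`, the rejected rate being put back on the diagonal entry `i`. -/
def metropolizeRow (f w : ι → R) (i j : ι) : R :=
  if j = i then f i + ∑ k ∈ univ.erase i, f k * (1 - w k) else f j * w j

theorem sum_metropolizeRow (f w : ι → R) (i : ι) :
    ∑ j, metropolizeRow f w i j = ∑ j, f j := by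
  have h_off : ∑ j ∈ univ.erase i, metropolizeRow f w i j = ∑ j ∈ univ.erase i, f j * w j :=
    sum_congr rfl fun j hj => if_neg (ne_of_mem_erase hj)
  rw [← add_sum_erase _ _ (mem_univ i), ← add_sum_erase _ _ (mem_univ i), h_off,
    metropolizeRow, if_pos rfl, add_assoc, ← sum_add_distrib]
  congr 1
  exact sum_congr rfl fun _ _ => by ring

end Metropolize

theorem coupling_control_variate_algorithm_correct_general
    {Ω : Type*} [Fintype Ω] [DecidableEq Ω]
    (RX : Ω → Ω → ℝ)
    (hRXnonneg : ∀ x x', 0 ≤ RX x x')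
    (hRXsymm : ∀ x x', 0 < RX x x' ↔ 0 < RX x' x)
    (Q : Ω → ℝ) (hQpos : ∀ x, 0 < Q x)
    (RXX : Ω × Ω → Ω × Ω → ℝ)
    (hRXXfst : ∀ x y x', x' ≠ x → ∑ y', RXX (x, y) (x', y') = RX x x')
    (hRXXsnd : ∀ x y y', y' ≠ y → ∑ x', RXX (x, y) (x', y') = RX y y')
    (a : Ω → Ω → ℝ)
    (ha : ∀ y y', a y y' =
      if y = y' then 1
      else if 0 < RX y y' then min 1 ((Q y' * RX y' y) / (Q y * RX y y'))
      else 1)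
    (RXY : Ω × Ω → Ω × Ω → ℝ)
    (hRXY : ∀ x y x' y', RXY (x, y) (x', y') =
      if y' = y then
        RXX (x, y) (x', y)
          + ∑ z ∈ univ.erase y, RXX (x, y) (x', z) * (1 - a y z)
      else RXX (x, y) (x', y') * a y y') :
    (∀ x y x', x' ≠ x → ∑ y', RXY (x, y) (x', y') = RX x x') ∧
    (∀ x y y', y' ≠ y → ∑ x', RXY (x, y) (x', y') = RX y y' * a y y') ∧
    (∀ y y', Q y * (RX y y' * a y y') = Q y' * (RX y' y * a y' y)) := by
  have ha_eq : a = metropolisAcceptance Q RX := funext₂ ha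
  refine ⟨fun x y x' hx => ?_, fun x y y' hy => ?_, ?_⟩
  · calc ∑ y', RXY (x, y) (x', y')
        = ∑ y', metropolizeRow (fun z => RXX (x, y) (x', z)) (a y) y y' :=
          sum_congr rfl fun y' _ => hRXY x y x' y'
      _ = RX x x' := (sum_metropolizeRow _ _ _).trans (hRXXfst x y x' hx)
  · calc ∑ x', RXY (x, y) (x', y')
        = ∑ x', RXX (x, y) (x', y') * a y y' :=
          sum_congr rfl fun x' _ => by rw [hRXY, if_neg hy]
      _ = RX y y' * a y y' := by rw [← sum_mul, hRXXsnd x y y' hy]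
  · rw [ha_eq]
    exact metropolisAcceptance_detailed_balance hQpos hRXnonneg hRXsymm

/-- **Correctness of the coupling control variate algorithm.**
Let `RX` be transition rates on a finite set `Ω` (zero diagonal, symmetric support), `Q` a
strictly positive probability measure, and `RXX` a Markov self-coupling of `RX` (both
marginal rate sums over distinct states equal `RX`).  Metropolize the second component:
with acceptance probability `a y y' = min 1 (Q y' RX y' y / (Q y RX y y'))` for `y ≠ y'`
with `RX y y' > 0` (and `a y y = 1`), set
`RXY ((x,y),(x',y')) = RXX ((x,y),(x',y')) · a y y'` for `y' ≠ y` and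
`RXY ((x,y),(x',y)) = RXX ((x,y),(x',y)) + ∑_{y'≠y} RXX ((x,y),(x',y')) (1 − a y y')`. Then
(i) the first marginal of `RXY` has rates `RX`, and (ii) for `y' ≠ y` the second marginal
rate sum equals `RX y y' · a y y'` (independently of `x`), and these rates satisfy detailed
balance with respect to `Q`. -/
theorem coupling_control_variate_algorithm_correct
    {Ω : Type*} [Fintype Ω] [DecidableEq Ω]
    (RX : Ω → Ω → ℝ)
    (hRXnonneg : ∀ x x', 0 ≤ RX x x') (hRXdiag : ∀ x, RX x x = 0)
    (hRXsymm : ∀ x x', 0 < RX x x' ↔ 0 < RX x' x)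
    (Q : Ω → ℝ) (hQpos : ∀ x, 0 < Q x) (hQsum : ∑ x, Q x = 1)
    (RXX : Ω × Ω → Ω × Ω → ℝ)
    (hRXXnonneg : ∀ p p', 0 ≤ RXX p p')
    (hRXXfst : ∀ x y x', x' ≠ x → ∑ y', RXX (x, y) (x', y') = RX x x')
    (hRXXsnd : ∀ x y y', y' ≠ y → ∑ x', RXX (x, y) (x', y') = RX y y')
    (a : Ω → Ω → ℝ)
    (ha : ∀ y y', a y y' =
      if y = y' then 1
      else if 0 < RX y y' then min 1 ((Q y' * RX y' y) / (Q y * RX y y'))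
      else 1)
    (RXY : Ω × Ω → Ω × Ω → ℝ)
    (hRXY : ∀ x y x' y', RXY (x, y) (x', y') =
      if y' = y then
        RXX (x, y) (x', y)
          + ∑ z ∈ univ.erase y, RXX (x, y) (x', z) * (1 - a y z)
      else RXX (x, y) (x', y') * a y y') :
    (∀ x y x', x' ≠ x → ∑ y', RXY (x, y) (x', y') = RX x x') ∧
    (∀ x y y', y' ≠ y → ∑ x', RXY (x, y) (x', y') = RX y y' * a y y') ∧
    (∀ y y', Q y * (RX y y' * a y y') = Q y' * (RX y' y * a y' y)) :=
  coupling_control_variate_algorithm_correct_general RX hRXnonneg hRXsymm Q hQpos RXX hRXXfst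
    hRXXsnd a ha RXY hRXY
end

section
/- Let X and Y be independent exponential random variables with rate β > 0, and let U be uniformly distributed on [0,1], independent of (X,Y). Then the pair (U·(X+Y), (1−U)·(X+Y)) has the same joint distribution as (X,Y); in particular, U·(X+Y) and (1−U)·(X+Y) are independent exponential random variables with rate β. -/
/-!
Under `(s, u) ↦ (u s, (1 - u) s)`, a bijection from `(0, ∞) × (0, 1)` onto the open quadrant
with Jacobian `s`, the density `β² s e^{-β s}` of `Gamma(2, β) ⊗ Unif[0, 1]` becomes
`β² e^{-β (x + y)}`, the density of two independent rate-`β` exponentials. Summing the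
coordinates of this identity shows `X + Y ~ Gamma(2, β)`; as `X + Y` is independent of `U`,
`(U (X + Y), (1 - U) (X + Y))` is the image of `Gamma(2, β) ⊗ Unif[0, 1]`.
-/

open MeasureTheory ProbabilityTheory Set
open scoped ENNReal

theorem map_withDensity_abs_det_fderiv_mul_comp {E : Type*} [NormedAddCommGroup E]
    [NormedSpace ℝ E] [FiniteDimensional ℝ E] [MeasurableSpace E] [BorelSpace E]
    (μ : Measure E) [μ.IsAddHaarMeasure] {s : Set E} {f : E → E} {f' : E → E →L[ℝ] E}
    (hs : MeasurableSet s)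
    (hf' : ∀ x ∈ s, HasFDerivWithinAt f (f' x) s x) (hf : InjOn f s) (hf_meas : Measurable f)
    (g : E → ℝ≥0∞) :
    Measure.map f ((μ.restrict s).withDensity fun x => ENNReal.ofReal |(f' x).det| * g (f x)) =
      (μ.restrict (f '' s)).withDensity g := by
  ext t ht
  have hpre : MeasurableSet (f ⁻¹' t ∩ s) := (hf_meas ht).inter hs
  rw [Measure.map_apply hf_meas ht, withDensity_apply _ (hf_meas ht), withDensity_apply _ ht,
    Measure.restrict_restrict (hf_meas ht), Measure.restrict_restrict ht, ← image_preimage_inter,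
    lintegral_image_eq_lintegral_abs_det_fderiv_mul μ hpre
      (fun x hx => (hf' x hx.2).mono inter_subset_right) (hf.mono inter_subset_right)]

theorem withDensity_eq_restrict_withDensity {α : Type*} [MeasurableSpace α] {μ : Measure α}
    {s : Set α} (hs : MeasurableSet s) {f : α → ℝ≥0∞} (hf : Function.support f ⊆ s) :
    μ.withDensity f = (μ.restrict s).withDensity f := by
  rw [← withDensity_indicator hs, indicator_eq_self.2 hf]

theorem ProbabilityTheory.map_eq_and_indepFun_of_map_prod_eq_prod {Ω α β : Type*}
    [MeasurableSpace Ω] [MeasurableSpace α] [MeasurableSpace β] {μ : Measure Ω}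
    [IsFiniteMeasure μ] {V : Ω → α} {W : Ω → β} (hV : Measurable V) (hW : Measurable W)
    {ν₁ : Measure α} {ν₂ : Measure β} [IsProbabilityMeasure ν₁] [IsProbabilityMeasure ν₂]
    (h : μ.map (fun ω => (V ω, W ω)) = ν₁.prod ν₂) :
    μ.map V = ν₁ ∧ μ.map W = ν₂ ∧ IndepFun V W μ := by
  have hV_law : μ.map V = ν₁ := by
    have := congrArg (Measure.map Prod.fst) h
    rwa [Measure.map_map measurable_fst (hV.prodMk hW), Measure.map_fst_prod, measure_univ,
      one_smul] at this
  have hW_law : μ.map W = ν₂ := by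
    have := congrArg (Measure.map Prod.snd) h
    rwa [Measure.map_map measurable_snd (hV.prodMk hW), Measure.map_snd_prod, measure_univ,
      one_smul] at this
  refine ⟨hV_law, hW_law, ?_⟩
  rw [indepFun_iff_map_prod_eq_prod_map_map hV.aemeasurable hW.aemeasurable, h, hV_law, hW_law]

namespace ProbabilityTheory

open Real

theorem gammaMeasure_eq_withDensity_restrict_Ioi (a r : ℝ) :
    gammaMeasure a r = (volume.restrict (Ioi 0)).withDensity (gammaPDF a r) := by
  rw [gammaMeasure, Measure.restrict_congr_set Ioi_ae_eq_Ici,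
    withDensity_eq_restrict_withDensity measurableSet_Ici]
  exact fun x hx => not_lt.1 fun hneg => hx (gammaPDF_of_neg hneg)

theorem measurable_gammaPDF (a r : ℝ) : Measurable (gammaPDF a r) :=
  (measurable_gammaPDFReal a r).ennreal_ofReal

theorem expMeasure_prod_expMeasure (β : ℝ) :
    (expMeasure β).prod (expMeasure β) = (volume.restrict (Ioi 0 ×ˢ Ioi 0)).withDensity
      fun p : ℝ × ℝ => exponentialPDF β p.1 * exponentialPDF β p.2 := by
  rw [expMeasure, gammaMeasure_eq_withDensity_restrict_Ioi, prod_withDensity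
    (measurable_gammaPDF 1 β) (measurable_gammaPDF 1 β), Measure.prod_restrict,
    ← Measure.volume_eq_prod]
  rfl

theorem gammaPDF_two_add_eq_mul_exponentialPDF {β x y : ℝ} (hβ : 0 ≤ β) (hx : 0 ≤ x)
    (hy : 0 ≤ y) :
    gammaPDF 2 β (x + y) =
      ENNReal.ofReal (x + y) * (exponentialPDF β x * exponentialPDF β y) := by
  rw [gammaPDF_of_nonneg (add_nonneg hx hy), exponentialPDF_of_nonneg hx,
    exponentialPDF_of_nonneg hy, ← ENNReal.ofReal_mul (by positivity),
    ← ENNReal.ofReal_mul (by positivity)]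
  congr 1
  rw [Gamma_two, show (2 : ℝ) - 1 = 1 by norm_num, rpow_one, show (2 : ℝ) = (2 : ℕ) by norm_num,
    rpow_natCast]
  have hexp : exp (-(β * x)) * exp (-(β * y)) = exp (-(β * (x + y))) := by
    rw [← exp_add]; ring_nf
  linear_combination -(x + y) * β ^ 2 * hexp

end ProbabilityTheory

namespace KMP

/-- `p = (s, u)`: the total energy `s` is split in the proportions `u` and `1 - u`. -/
def redistribute (p : ℝ × ℝ) : ℝ × ℝ := (p.2 * p.1, (1 - p.2) * p.1)

@[fun_prop]
theorem measurable_redistribute : Measurable redistribute := by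
  unfold redistribute; fun_prop

theorem redistribute_fst_add_snd (p : ℝ × ℝ) :
    (redistribute p).1 + (redistribute p).2 = p.1 := by
  simp only [redistribute]; ring

noncomputable def fderivRedistribute (p : ℝ × ℝ) : ℝ × ℝ →L[ℝ] ℝ × ℝ :=
  LinearMap.toContinuousLinearMap
    (Matrix.toLin (Module.Basis.finTwoProd ℝ) (Module.Basis.finTwoProd ℝ)
      !![p.2, p.1; 1 - p.2, -p.1])

theorem hasFDerivAt_redistribute (p : ℝ × ℝ) :
    HasFDerivAt redistribute (fderivRedistribute p) p := by
  rw [fderivRedistribute, Matrix.toLin_finTwoProd_toContinuousLinearMap]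
  refine ((hasFDerivAt_snd.mul hasFDerivAt_fst).prodMk
    (((hasFDerivAt_const 1 p).sub hasFDerivAt_snd).mul hasFDerivAt_fst)).congr_fderiv ?_
  ext <;> simp

theorem det_fderivRedistribute (p : ℝ × ℝ) : (fderivRedistribute p).det = -p.1 := by
  simp only [fderivRedistribute, LinearMap.det_toContinuousLinearMap, LinearMap.det_toLin,
    Matrix.det_fin_two_of]
  ring

theorem injOn_redistribute : InjOn redistribute (Ioi 0 ×ˢ Ioo 0 1) := by
  rintro ⟨s, u⟩ ⟨hs, -⟩ ⟨s', u'⟩ - h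
  have hs' : s = s' := by simpa [redistribute_fst_add_snd] using congrArg (fun q => q.1 + q.2) h
  subst hs'
  have hu : u * s = u' * s := congrArg Prod.fst h
  rw [mul_right_cancel₀ hs.ne' hu]

theorem image_redistribute : redistribute '' (Ioi 0 ×ˢ Ioo 0 1) = Ioi 0 ×ˢ Ioi 0 := by
  ext ⟨x, y⟩
  simp only [mem_image, mem_prod, mem_Ioi, mem_Ioo, redistribute, Prod.mk.injEq, Prod.exists]
  constructor
  · rintro ⟨s, u, ⟨hs, hu0, hu1⟩, rfl, rfl⟩
    exact ⟨mul_pos hu0 hs, mul_pos (sub_pos.2 hu1) hs⟩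
  · rintro ⟨hx, hy⟩
    have hxy : 0 < x + y := add_pos hx hy
    refine ⟨x + y, x / (x + y), ⟨hxy, div_pos hx hxy, (div_lt_one hxy).2 (by linarith)⟩, ?_, ?_⟩
    · field_simp
    · field_simp; ring

theorem map_redistribute_withDensity (ρ : ℝ × ℝ → ℝ≥0∞) :
    Measure.map redistribute ((volume.restrict (Ioi 0 ×ˢ Ioo 0 1)).withDensity
        fun q => ENNReal.ofReal q.1 * ρ (redistribute q)) =
      (volume.restrict (Ioi 0 ×ˢ Ioi 0)).withDensity ρ := by
  have hA : MeasurableSet (Ioi (0 : ℝ) ×ˢ Ioo (0 : ℝ) 1) :=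
    measurableSet_Ioi.prod measurableSet_Ioo
  rw [← image_redistribute, ← map_withDensity_abs_det_fderiv_mul_comp volume hA
    (fun q _ => (hasFDerivAt_redistribute q).hasFDerivWithinAt) injOn_redistribute
    measurable_redistribute]
  refine congrArg _ (withDensity_congr_ae ((ae_restrict_iff' hA).2 (ae_of_all _ ?_)))
  rintro q ⟨hs, -⟩
  dsimp only
  rw [det_fderivRedistribute, abs_neg, abs_of_pos hs]

theorem map_redistribute_gammaMeasure_prod {β : ℝ} (hβ : 0 ≤ β) :
    Measure.map redistribute ((gammaMeasure 2 β).prod (volume.restrict (Icc 0 1))) =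
      (expMeasure β).prod (expMeasure β) := by
  have hA : MeasurableSet (Ioi (0 : ℝ) ×ˢ Ioo (0 : ℝ) 1) :=
    measurableSet_Ioi.prod measurableSet_Ioo
  rw [gammaMeasure_eq_withDensity_restrict_Ioi, ← Measure.restrict_congr_set Ioo_ae_eq_Icc,
    prod_withDensity_left (measurable_gammaPDF 2 β), Measure.prod_restrict,
    ← Measure.volume_eq_prod, expMeasure_prod_expMeasure, ← map_redistribute_withDensity]
  refine congrArg _ (withDensity_congr_ae ((ae_restrict_iff' hA).2 (ae_of_all _ ?_)))
  rintro ⟨s, u⟩ ⟨hs, hu0, hu1⟩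
  have h := gammaPDF_two_add_eq_mul_exponentialPDF hβ (mul_nonneg hu0.le hs.le)
    (mul_nonneg (sub_pos.2 hu1).le hs.le)
  rwa [← add_mul, add_sub_cancel, one_mul] at h

end KMP

theorem ProbabilityTheory.expMeasure_conv_expMeasure {β : ℝ} (hβ : 0 ≤ β) :
    expMeasure β ∗ expMeasure β = gammaMeasure 2 β := by
  have : IsProbabilityMeasure (volume.restrict (Icc (0 : ℝ) 1)) := ⟨by simp⟩
  rw [Measure.conv, ← KMP.map_redistribute_gammaMeasure_prod hβ,
    Measure.map_map (by fun_prop) KMP.measurable_redistribute]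
  simp only [Function.comp_def, KMP.redistribute_fst_add_snd]
  rw [Measure.map_fst_prod, measure_univ, one_smul]

/-- **Invariance property underlying the KMP redistribution step.**
Let `X, Y` be independent exponential random variables of rate `β > 0` and `U` uniform on
`[0,1]`, independent of `(X,Y)`.  Then `(U (X+Y), (1−U)(X+Y))` has the same joint law as
`(X, Y)`; in particular its components are independent rate-`β` exponentials. -/
theorem kmp_redistribution_invariance
    {Ω : Type*} [MeasurableSpace Ω] (μ : Measure Ω) [IsProbabilityMeasure μ]
    (X Y U : Ω → ℝ) (hX : Measurable X) (hY : Measurable Y) (hU : Measurable U)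
    (β : ℝ) (hβ : 0 < β)
    (hXlaw : Measure.map X μ = expMeasure β)
    (hYlaw : Measure.map Y μ = expMeasure β)
    (hUlaw : Measure.map U μ = volume.restrict (Set.Icc (0 : ℝ) 1))
    (hXYindep : IndepFun X Y μ)
    (hUindep : IndepFun (fun ω => (X ω, Y ω)) U μ) :
    Measure.map (fun ω => (U ω * (X ω + Y ω), (1 - U ω) * (X ω + Y ω))) μ
      = Measure.map (fun ω => (X ω, Y ω)) μ ∧
    Measure.map (fun ω => U ω * (X ω + Y ω)) μ = expMeasure β ∧
    Measure.map (fun ω => (1 - U ω) * (X ω + Y ω)) μ = expMeasure β ∧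
    IndepFun (fun ω => U ω * (X ω + Y ω)) (fun ω => (1 - U ω) * (X ω + Y ω)) μ := by
  have : IsProbabilityMeasure (expMeasure β) := isProbabilityMeasure_expMeasure hβ
  have hXY_law : μ.map (fun ω => (X ω, Y ω)) = (expMeasure β).prod (expMeasure β) := by
    rw [hXYindep.map_prod_eq_prod_map_map hX.aemeasurable hY.aemeasurable, hXlaw, hYlaw]
  have hS_law : μ.map (X + Y) = gammaMeasure 2 β := by
    rw [hXYindep.map_add_eq_map_conv_map hX hY, hXlaw, hYlaw, expMeasure_conv_expMeasure hβ.le]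
  have hSU_law : μ.map (fun ω => ((X + Y) ω, U ω)) =
      (gammaMeasure 2 β).prod (volume.restrict (Icc 0 1)) := by
    have hSU : IndepFun (X + Y) U μ :=
      hUindep.comp (φ := fun p : ℝ × ℝ => p.1 + p.2) (by fun_prop) measurable_id
    rw [hSU.map_prod_eq_prod_map_map (hX.add hY).aemeasurable hU.aemeasurable, hS_law, hUlaw]
  have h_law : μ.map (fun ω => (U ω * (X ω + Y ω), (1 - U ω) * (X ω + Y ω))) =
      (expMeasure β).prod (expMeasure β) := by
    rw [← KMP.map_redistribute_gammaMeasure_prod hβ.le, ← hSU_law,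
      Measure.map_map KMP.measurable_redistribute (by fun_prop)]
    rfl
  exact ⟨h_law.trans hXY_law.symm,
    map_eq_and_indepFun_of_map_prod_eq_prod (by fun_prop) (by fun_prop) h_law⟩
end
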